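/- arXiv:1906.10191 — 2 statements merged into one kernel-verified Lean document; each statement's English description precedes it below -/
import Mathlib

section
/- For the three point vortex system on the plane, the derivative of the squared distance between vortices i and j satisfies d/dt |x_i(t)-x_j(t)|^2 = 2 c_ε ξ_k A(t) ( |x_i(t)-x_k(t)|^{-(3-ε)} - |x_k(t)-x_j(t)|^{-(3-ε)} ), where k is the third index and A(t) = x_j·x_k^⊥ - x_i·x_k^⊥ - x_j·x_i^⊥ is twice the signed area of the triangle with vertices x_i, x_j, x_k. -/
open scoped RealInnerProductSpace

noncomputable def perp (x : EuclideanSpace ℝ (Fin 2)) : EuclideanSpace ℝ (Fin 2) :=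
  !₂[x 1, -x 0]

noncomputable def K (ε c : ℝ) (x : EuclideanSpace ℝ (Fin 2)) : EuclideanSpace ℝ (Fin 2) :=
  (c / ‖x‖ ^ (3 - ε)) • perp x

/-! Write `u = x i - x j`, so `d/dt ‖u‖² = 2 ⟪u, u'⟫`. Since `K v` is a multiple of `perp v`, which
is orthogonal to `v`, the interaction of `i` and `j` with each other drops out of `⟪u, u'⟫`, leaving
`ξ k ⟪u, K (x i - x k) - K (x j - x k)⟫`. Both `⟪u, perp (x i - x k)⟫` and `⟪u, perp (x j - x k)⟫`
equal twice the signed area of the triangle, which gives the formula. -/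

local notation "E²" => EuclideanSpace ℝ (Fin 2)

lemma perp_sub (a b : E²) : perp (a - b) = perp a - perp b := by
  ext l; fin_cases l <;> simp [perp, sub_eq_add_neg, add_comm]

lemma perp_neg (a : E²) : perp (-a) = -perp a := by
  ext l; fin_cases l <;> simp [perp]

lemma inner_perp (a b : E²) : ⟪a, perp b⟫ = a 0 * b 1 - a 1 * b 0 := by
  simp only [perp, PiLp.inner_apply, RCLike.inner_apply, Real.ringHom_apply, Fin.sum_univ_two,
    Matrix.cons_val_zero, Matrix.cons_val_one, Matrix.cons_val_fin_one]
  ring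

lemma inner_perp_self (a : E²) : ⟪a, perp a⟫ = 0 := by
  rw [inner_perp]; ring

lemma inner_perp_comm (a b : E²) : ⟪a, perp b⟫ = -⟪b, perp a⟫ := by
  rw [inner_perp, inner_perp]; ring

section Kernel

variable (ε c : ℝ)

lemma K_neg (v : E²) : K ε c (-v) = -K ε c v := by
  simp [K, perp_neg]

lemma inner_K (u v : E²) : ⟪u, K ε c v⟫ = c * ‖v‖ ^ (-(3 - ε)) * ⟪u, perp v⟫ := by
  rw [K, inner_smul_right, Real.rpow_neg (norm_nonneg v), div_eq_mul_inv]

lemma inner_K_self (v : E²) : ⟪v, K ε c v⟫ = 0 := by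
  rw [inner_K, inner_perp_self, mul_zero]

end Kernel

noncomputable def twiceSignedArea (p q r : E²) : ℝ :=
  ⟪q, perp r⟫ - ⟪p, perp r⟫ - ⟪q, perp p⟫

lemma inner_sub_perp_sub_left (p q r : E²) :
    ⟪p - q, perp (p - r)⟫ = twiceSignedArea p q r := by
  simp only [twiceSignedArea, perp_sub, inner_sub_left, inner_sub_right, inner_perp_self]
  ring

lemma inner_sub_perp_sub_right (p q r : E²) :
    ⟪p - q, perp (q - r)⟫ = twiceSignedArea p q r := by
  simp only [twiceSignedArea, perp_sub, inner_sub_left, inner_sub_right, inner_perp_self,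
    inner_perp_comm p q]
  ring

noncomputable def vortexVelocity {ι : Type*} [Fintype ι] [DecidableEq ι] (ε c : ℝ) (ξ : ι → ℝ)
    (p : ι → E²) (i : ι) : E² :=
  ∑ j ∈ Finset.univ.erase i, ξ j • K ε c (p i - p j)

section ThreeVortices

variable (ε c : ℝ) (ξ : Fin 3 → ℝ) (p : Fin 3 → E²) {i j k : Fin 3}

lemma vortexVelocity_fin_three (hij : i ≠ j) (hik : i ≠ k) (hjk : j ≠ k) :
    vortexVelocity ε c ξ p i = ξ j • K ε c (p i - p j) + ξ k • K ε c (p i - p k) := by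
  have hpair : Finset.univ.erase i = {j, k} := by revert i j k; decide
  rw [vortexVelocity, hpair, Finset.sum_pair hjk]

lemma inner_sub_vortexVelocity_sub (hij : i ≠ j) (hik : i ≠ k) (hjk : j ≠ k) :
    ⟪p i - p j, vortexVelocity ε c ξ p i - vortexVelocity ε c ξ p j⟫ =
      c * ξ k * twiceSignedArea (p i) (p j) (p k) *
        (‖p i - p k‖ ^ (-(3 - ε)) - ‖p k - p j‖ ^ (-(3 - ε))) := by
  rw [vortexVelocity_fin_three ε c ξ p hij hik hjk,
    vortexVelocity_fin_three ε c ξ p hij.symm hjk hik, ← neg_sub (p i) (p j), K_neg]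
  simp only [inner_sub_right, inner_add_right, inner_smul_right, inner_neg_right, neg_sub,
    inner_K_self, inner_K, inner_sub_perp_sub_left, inner_sub_perp_sub_right, norm_sub_rev (p k)]
  ring

end ThreeVortices

theorem stmt_0_general (ε c : ℝ)
    (ξ : Fin 3 → ℝ)
    (x : Fin 3 → ℝ → EuclideanSpace ℝ (Fin 2)) (I : Set ℝ)
    (hode : ∀ i : Fin 3, ∀ s ∈ I,
      HasDerivAt (x i) (∑ j ∈ Finset.univ.erase i, ξ j • K ε c (x i s - x j s)) s)
    (i j k : Fin 3) (hij : i ≠ j) (hik : i ≠ k) (hjk : j ≠ k)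
    (t : ℝ) (ht : t ∈ I) :
    HasDerivAt (fun s => ‖x i s - x j s‖ ^ 2)
      (2 * c * ξ k *
        (⟪x j t, perp (x k t)⟫ - ⟪x i t, perp (x k t)⟫ - ⟪x j t, perp (x i t)⟫) *
        (‖x i t - x k t‖ ^ (-(3 - ε)) - ‖x k t - x j t‖ ^ (-(3 - ε)))) t := by
  have hdiff : HasDerivAt (fun s => x i s - x j s)
      (vortexVelocity ε c ξ (x · t) i - vortexVelocity ε c ξ (x · t) j) t :=
    (hode i t ht).sub (hode j t ht)
  convert hdiff.norm_sq using 1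
  rw [inner_sub_vortexVelocity_sub ε c ξ (x · t) hij hik hjk, twiceSignedArea]
  ring

/-- derivative of the squared distance between vortices `i` and `j`
in the three point vortex system. -/
theorem stmt_0 (ε c : ℝ) (hε : ε ∈ Set.Ioo (0:ℝ) 1) (hc : 0 < c)
    (ξ : Fin 3 → ℝ) (hξ : ∀ i, ξ i ≠ 0)
    (x : Fin 3 → ℝ → EuclideanSpace ℝ (Fin 2)) (I : Set ℝ) (hI : IsOpen I)
    (hdist : ∀ s ∈ I, ∀ i j : Fin 3, i ≠ j → x i s ≠ x j s)
    (hode : ∀ i : Fin 3, ∀ s ∈ I,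
      HasDerivAt (x i) (∑ j ∈ Finset.univ.erase i, ξ j • K ε c (x i s - x j s)) s)
    (i j k : Fin 3) (hij : i ≠ j) (hik : i ≠ k) (hjk : j ≠ k)
    (t : ℝ) (ht : t ∈ I) :
    HasDerivAt (fun s => ‖x i s - x j s‖ ^ 2)
      (2 * c * ξ k *
        (⟪x j t, perp (x k t)⟫ - ⟪x i t, perp (x k t)⟫ - ⟪x j t, perp (x i t)⟫) *
        (‖x i t - x k t‖ ^ (-(3 - ε)) - ‖x k t - x j t‖ ^ (-(3 - ε)))) t :=
  stmt_0_general ε c ξ x I hode i j k hij hik hjk t ht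
end

section
/- Along any solution of the three point vortex system with pairwise distinct points, the ratio l_{1,2}(t)²/l_{2,3}(t)² satisfies d/dt ( l_{1,2}²/l_{2,3}² ) = ξ_1 ξ_3 · (2 c_ε A(t)/l_{2,3}(t)^4) · ( S · l_{3,1}(t)^{ε-3} − S_ε ), where S and S_ε are the invariants S = l_{1,2}²/ξ_3 + l_{2,3}²/ξ_1 + l_{3,1}²/ξ_2 and S_ε = l_{1,2}^{ε-1}/ξ_3 + l_{2,3}^{ε-1}/ξ_1 + l_{3,1}^{ε-1}/ξ_2. -/
open scoped RealInnerProductSpace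

/-!
Since `K ε c v` is orthogonal to `v`, in `d/dt l₁₂² = 2⟪x₁ - x₂, ẋ₁ - ẋ₂⟫` the mutual interaction of
the pair drops out and only the third vortex contributes, through `⟪x₁ - x₂, (x₁ - x₃)^⊥⟫` and
`⟪x₁ - x₂, (x₂ - x₃)^⊥⟫`; both equal the doubled signed area `A`. This gives
`d/dt l₁₂² = 2 ξ₃ c A (l₃₁^(ε-3) - l₂₃^(ε-3))` and, by relabelling the vortices cyclically, the
analogous formula for `l₂₃²`. The quotient rule and `l^(ε-1) = l^(ε-3) l²` then produce the
expression through `S` and `S_ε`.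
-/

local notation "ℝ²" => EuclideanSpace ℝ (Fin 2)

lemma inner_perp_s4 (u v : ℝ²) : ⟪u, perp v⟫ = u 0 * v 1 - u 1 * v 0 := by
  simp only [perp, PiLp.inner_apply, RCLike.inner_apply, Real.ringHom_apply, Fin.sum_univ_two,
    Matrix.cons_val_zero, Matrix.cons_val_one, Matrix.cons_val_fin_one, neg_mul]
  ring

lemma inner_self_perp (u : ℝ²) : ⟪u, perp u⟫ = 0 := by
  rw [inner_perp_s4]; ring

lemma K_eq_rpow_smul (ε c : ℝ) (v : ℝ²) : K ε c v = (c * ‖v‖ ^ (ε - 3)) • perp v := by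
  rw [K, div_eq_mul_inv, ← Real.rpow_neg (norm_nonneg v), neg_sub]

@[simp]
lemma K_zero (ε c : ℝ) : K ε c 0 = 0 := by
  simp [K, perp]

lemma inner_self_K (ε c : ℝ) (v : ℝ²) : ⟪v, K ε c v⟫ = 0 := by
  rw [K, real_inner_smul_right, inner_self_perp, mul_zero]

noncomputable def doubleArea (a b c : ℝ²) : ℝ :=
  ⟪b, perp c⟫ - ⟪a, perp c⟫ - ⟪b, perp a⟫

lemma doubleArea_rotate (a b c : ℝ²) : doubleArea b c a = doubleArea a b c := by
  simp only [doubleArea, inner_perp_s4]; ring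

lemma inner_sub_perp_sub_left_s4 (a b c : ℝ²) : ⟪a - b, perp (a - c)⟫ = doubleArea a b c := by
  simp only [doubleArea, inner_perp_s4, PiLp.sub_apply]; ring

lemma inner_sub_perp_sub_right_s4 (a b c : ℝ²) : ⟪a - b, perp (b - c)⟫ = doubleArea a b c := by
  simp only [doubleArea, inner_perp_s4, PiLp.sub_apply]; ring

noncomputable def vortexField {n : ℕ} (ε c : ℝ) (ξ : Fin n → ℝ) (p : Fin n → ℝ²) (z : ℝ²) : ℝ² :=
  ∑ j, ξ j • K ε c (z - p j)

lemma vortexField_comp_perm {n : ℕ} (ε c : ℝ) (ξ : Fin n → ℝ) (p : Fin n → ℝ²)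
    (σ : Equiv.Perm (Fin n)) :
    vortexField ε c (fun j => ξ (σ j)) (fun j => p (σ j)) = vortexField ε c ξ p := by
  ext1 z
  exact Equiv.sum_comp σ fun j => ξ j • K ε c (z - p j)

lemma sum_erase_smul_K {n : ℕ} (ε c : ℝ) (ξ : Fin n → ℝ) (p : Fin n → ℝ²) (i : Fin n) :
    ∑ j ∈ Finset.univ.erase i, ξ j • K ε c (p i - p j) = vortexField ε c ξ p (p i) :=
  Finset.sum_erase _ (by simp)

lemma inner_sub_vortexField_sub (ε c : ℝ) (ξ : Fin 3 → ℝ) (p : Fin 3 → ℝ²) :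
    ⟪p 0 - p 1, vortexField ε c ξ p (p 0) - vortexField ε c ξ p (p 1)⟫
      = ξ 2 * c * doubleArea (p 0) (p 1) (p 2)
        * (‖p 2 - p 0‖ ^ (ε - 3) - ‖p 1 - p 2‖ ^ (ε - 3)) := by
  have h10 : ⟪p 0 - p 1, K ε c (p 1 - p 0)⟫ = 0 := by
    rw [← neg_sub, inner_neg_left, inner_self_K, neg_zero]
  simp only [vortexField, Fin.sum_univ_three, sub_self, K_zero, smul_zero, zero_add, add_zero,
    inner_sub_right, inner_add_right, real_inner_smul_right, inner_self_K, h10]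
  rw [K_eq_rpow_smul, K_eq_rpow_smul, real_inner_smul_right, real_inner_smul_right,
    inner_sub_perp_sub_left_s4, inner_sub_perp_sub_right_s4, norm_sub_rev (p 0)]
  ring

lemma hasDerivAt_norm_sub_sq_of_vortex {ε c : ℝ} {ξ : Fin 3 → ℝ}
    {x : Fin 3 → ℝ → ℝ²} {t : ℝ}
    (hx : ∀ i, HasDerivAt (x i) (vortexField ε c ξ (fun j => x j t) (x i t)) t) :
    HasDerivAt (fun s => ‖x 0 s - x 1 s‖ ^ 2)
      (2 * (ξ 2 * c * doubleArea (x 0 t) (x 1 t) (x 2 t)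
        * (‖x 2 t - x 0 t‖ ^ (ε - 3) - ‖x 1 t - x 2 t‖ ^ (ε - 3)))) t := by
  rw [← inner_sub_vortexField_sub ε c ξ fun j => x j t]
  exact ((hx 0).sub (hx 1)).norm_sq

lemma rpow_sub_one_eq_rpow_sub_three_mul_sq {l : ℝ} (hl : l ≠ 0) (ε : ℝ) :
    l ^ (ε - 1) = l ^ (ε - 3) * l ^ 2 := by
  rw [← Real.rpow_add_natCast hl]
  congr 1
  push_cast
  ring

lemma ratio_deriv_eq_invariants {ε c A ξ₀ ξ₁ ξ₂ l₁₂ l₂₃ l₃₁ : ℝ} (h₁₂ : l₁₂ ≠ 0) (h₂₃ : l₂₃ ≠ 0)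
    (h₃₁ : l₃₁ ≠ 0) (hξ₀ : ξ₀ ≠ 0) (hξ₂ : ξ₂ ≠ 0) :
    (2 * (ξ₂ * c * A * (l₃₁ ^ (ε - 3) - l₂₃ ^ (ε - 3))) * l₂₃ ^ 2
        - l₁₂ ^ 2 * (2 * (ξ₀ * c * A * (l₁₂ ^ (ε - 3) - l₃₁ ^ (ε - 3))))) / (l₂₃ ^ 2) ^ 2
      = ξ₀ * ξ₂ * (2 * c * A / l₂₃ ^ 4)
        * ((l₁₂ ^ 2 / ξ₂ + l₂₃ ^ 2 / ξ₀ + l₃₁ ^ 2 / ξ₁) * l₃₁ ^ (ε - 3)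
          - (l₁₂ ^ (ε - 1) / ξ₂ + l₂₃ ^ (ε - 1) / ξ₀ + l₃₁ ^ (ε - 1) / ξ₁)) := by
  rw [rpow_sub_one_eq_rpow_sub_three_mul_sq h₁₂, rpow_sub_one_eq_rpow_sub_three_mul_sq h₂₃,
    rpow_sub_one_eq_rpow_sub_three_mul_sq h₃₁]
  field_simp
  ring

theorem stmt_4_general (ε c : ℝ)
    (ξ : Fin 3 → ℝ) (hξ : ∀ i, ξ i ≠ 0)
    (x : Fin 3 → ℝ → EuclideanSpace ℝ (Fin 2)) (I : Set ℝ)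
    (hdist : ∀ s ∈ I, ∀ i j : Fin 3, i ≠ j → x i s ≠ x j s)
    (hode : ∀ i : Fin 3, ∀ s ∈ I,
      HasDerivAt (x i) (∑ j ∈ Finset.univ.erase i, ξ j • K ε c (x i s - x j s)) s)
    (t : ℝ) (ht : t ∈ I)
    (A S Sε : ℝ)
    (hA : A = ⟪x 1 t, perp (x 2 t)⟫ - ⟪x 0 t, perp (x 2 t)⟫ - ⟪x 1 t, perp (x 0 t)⟫)
    (hS : S = ‖x 0 t - x 1 t‖ ^ 2 / ξ 2 + ‖x 1 t - x 2 t‖ ^ 2 / ξ 0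
        + ‖x 2 t - x 0 t‖ ^ 2 / ξ 1)
    (hSε : Sε = ‖x 0 t - x 1 t‖ ^ (ε - 1) / ξ 2 + ‖x 1 t - x 2 t‖ ^ (ε - 1) / ξ 0
        + ‖x 2 t - x 0 t‖ ^ (ε - 1) / ξ 1) :
    HasDerivAt (fun s => ‖x 0 s - x 1 s‖ ^ 2 / ‖x 1 s - x 2 s‖ ^ 2)
      (ξ 0 * ξ 2 * (2 * c * A / ‖x 1 t - x 2 t‖ ^ 4)
        * (S * ‖x 2 t - x 0 t‖ ^ (ε - 3) - Sε)) t := by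
  have hl : ∀ i j : Fin 3, i ≠ j → ‖x i t - x j t‖ ≠ 0 := fun i j hij =>
    norm_ne_zero_iff.2 (sub_ne_zero.2 (hdist t ht i j hij))
  have hvel (i : Fin 3) : HasDerivAt (x i) (vortexField ε c ξ (fun j => x j t) (x i t)) t := by
    rw [← sum_erase_smul_K ε c ξ (fun j => x j t) i]
    exact hode i t ht
  have h₁₂ := hasDerivAt_norm_sub_sq_of_vortex hvel
  have h₂₃ : HasDerivAt (fun s => ‖x 1 s - x 2 s‖ ^ 2)
      (2 * (ξ 0 * c * doubleArea (x 1 t) (x 2 t) (x 0 t)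
        * (‖x 0 t - x 1 t‖ ^ (ε - 3) - ‖x 2 t - x 0 t‖ ^ (ε - 3)))) t :=
    hasDerivAt_norm_sub_sq_of_vortex (x := fun i => x (finRotate 3 i))
      (ξ := fun i => ξ (finRotate 3 i)) fun i => by
        rw [vortexField_comp_perm ε c ξ (fun j => x j t)]
        exact hvel _
  have hA' : doubleArea (x 0 t) (x 1 t) (x 2 t) = A := hA.symm
  rw [doubleArea_rotate, hA'] at h₂₃
  rw [hA'] at h₁₂
  refine (h₁₂.div h₂₃ (pow_ne_zero 2 (hl 1 2 (by decide)))).congr_deriv ?_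
  rw [hS, hSε]
  exact ratio_deriv_eq_invariants (hl 0 1 (by decide)) (hl 1 2 (by decide)) (hl 2 0 (by decide)) (hξ 0) (hξ 2)

/-- derivative of the ratio `l₁₂²/l₂₃²` expressed through the
invariants `S` and `S_ε`. -/
theorem stmt_4 (ε c : ℝ) (hε : ε ∈ Set.Ioo (0:ℝ) 1) (hc : 0 < c)
    (ξ : Fin 3 → ℝ) (hξ : ∀ i, ξ i ≠ 0)
    (x : Fin 3 → ℝ → EuclideanSpace ℝ (Fin 2)) (I : Set ℝ) (hI : IsOpen I)
    (hdist : ∀ s ∈ I, ∀ i j : Fin 3, i ≠ j → x i s ≠ x j s)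
    (hode : ∀ i : Fin 3, ∀ s ∈ I,
      HasDerivAt (x i) (∑ j ∈ Finset.univ.erase i, ξ j • K ε c (x i s - x j s)) s)
    (t : ℝ) (ht : t ∈ I)
    (A S Sε : ℝ)
    (hA : A = ⟪x 1 t, perp (x 2 t)⟫ - ⟪x 0 t, perp (x 2 t)⟫ - ⟪x 1 t, perp (x 0 t)⟫)
    (hS : S = ‖x 0 t - x 1 t‖ ^ 2 / ξ 2 + ‖x 1 t - x 2 t‖ ^ 2 / ξ 0
        + ‖x 2 t - x 0 t‖ ^ 2 / ξ 1)
    (hSε : Sε = ‖x 0 t - x 1 t‖ ^ (ε - 1) / ξ 2 + ‖x 1 t - x 2 t‖ ^ (ε - 1) / ξ 0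
        + ‖x 2 t - x 0 t‖ ^ (ε - 1) / ξ 1) :
    HasDerivAt (fun s => ‖x 0 s - x 1 s‖ ^ 2 / ‖x 1 s - x 2 s‖ ^ 2)
      (ξ 0 * ξ 2 * (2 * c * A / ‖x 1 t - x 2 t‖ ^ 4)
        * (S * ‖x 2 t - x 0 t‖ ^ (ε - 3) - Sε)) t :=
  stmt_4_general ε c ξ hξ x I hdist hode t ht A S Sε hA hS hSε
end
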